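/- arXiv:1612.01599 — 2 statements merged into one kernel-verified Lean document; each statement's English description precedes it below -/
import Mathlib

section
/- For every n ≥ 0, U(r^{n+6}) = U(r^{n+5}) + (r^6+r^5+r^2+r)·U(r^n). -/
open Polynomial

noncomputable section

/-- `F = r(r+1)^5` in `(ZMod 2)[r]`. -/
def Fp : Polynomial (ZMod 2) := X * (X + 1) ^ 5

/-- `G = r^5(r+1)` in `(ZMod 2)[r]`. -/
def Gp : Polynomial (ZMod 2) := X ^ 5 * (X + 1)

/-- The images `v_0, …, v_5` of `1, r, …, r^5` under `U`. -/
def v : ℕ → Polynomial (ZMod 2)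
  | 0 => 1
  | 1 => X
  | 2 => X ^ 2
  | 3 => X ^ 3 + X ^ 2 + X
  | 4 => X ^ 4
  | 5 => X ^ 5 + X ^ 4 + X
  | _ => 0

/-- `U` is the unique `ZMod 2`-linear map with `U (G^k r^i) = F^k v_i` for `0 ≤ i ≤ 5`. -/
def IsU (U : Polynomial (ZMod 2) →ₗ[ZMod 2] Polynomial (ZMod 2)) : Prop :=
  ∀ k i : ℕ, i ≤ 5 → U (Gp ^ k * X ^ i) = Fp ^ k * v i

/-! In characteristic 2 we have `r^(m+6) = G r^m + r^(m+5)`. By strong induction on the exponent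
this identity propagates `U (G^k r^i) = F^k U (r^i)` from `i ≤ 5` to all `i`; applied once more
with `k = 1` it gives the recursion, since `F = r^6 + r^5 + r^2 + r`. -/

theorem X_pow_add_six (m : ℕ) :
    (X : Polynomial (ZMod 2)) ^ (m + 6) = Gp * X ^ m + X ^ (m + 5) := by
  rw [Gp]
  linear_combination -CharTwo.add_self_eq_zero ((X : Polynomial (ZMod 2)) ^ (m + 5))

theorem Fp_eq : Fp = X ^ 6 + X ^ 5 + X ^ 2 + X := by
  rw [Fp]
  linear_combination (2 * X ^ 5 + 5 * X ^ 4 + 5 * X ^ 3 + 2 * X ^ 2 : Polynomial (ZMod 2)) *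
    CharTwo.two_eq_zero (R := Polynomial (ZMod 2))

namespace IsU

variable {U : Polynomial (ZMod 2) →ₗ[ZMod 2] Polynomial (ZMod 2)}

theorem map_X_pow (hU : IsU U) {i : ℕ} (hi : i ≤ 5) : U (X ^ i) = v i := by
  simpa using hU 0 i hi

theorem map_Gp_pow_mul_X_pow (hU : IsU U) (n : ℕ) :
    ∀ k : ℕ, U (Gp ^ k * X ^ n) = Fp ^ k * U (X ^ n) := by
  induction n using Nat.strong_induction_on with
  | _ n ih =>
    intro k
    by_cases hn : n ≤ 5
    · rw [hU k n hn, hU.map_X_pow hn]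
    obtain ⟨m, rfl⟩ : ∃ m, n = m + 6 := ⟨n - 6, by omega⟩
    have hsplit : Gp ^ k * (X : Polynomial (ZMod 2)) ^ (m + 6) =
        Gp ^ (k + 1) * X ^ m + Gp ^ k * X ^ (m + 5) := by
      rw [X_pow_add_six]; ring
    have hGp := ih m (by omega) 1
    rw [pow_one, pow_one] at hGp
    rw [hsplit, map_add, ih m (by omega), ih (m + 5) (by omega), X_pow_add_six, map_add, hGp]
    ring

end IsU

theorem U_rec (U : Polynomial (ZMod 2) →ₗ[ZMod 2] Polynomial (ZMod 2)) (hU : IsU U) (n : ℕ) :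
    U (X ^ (n + 6)) = U (X ^ (n + 5)) + (X ^ 6 + X ^ 5 + X ^ 2 + X) * U (X ^ n) := by
  have hGp := hU.map_Gp_pow_mul_X_pow n 1
  rw [pow_one, pow_one] at hGp
  rw [X_pow_add_six, map_add, hGp, Fp_eq, add_comm]

end
end

section
/- For every n ≥ 0, the elements P_n = U(F^n) satisfy the recurrence P_{n+6} + F^2·P_{n+4} + F^4·P_{n+2} + F^6·P_n + F·P_{n+1} = 0 in (ZMod 2)[r]. -/
open Polynomial

noncomputable section

/-!
In characteristic 2 we have `F + G = r(r+1)` and `FG = (r(r+1))^6`, so `(F+G)^6 + FG = 0`,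
i.e. `F^6 = G^2 F^4 + G^4 F^2 + G^6 + G F`. Since `G` is monic of degree 6, the `G^k r^i` span
`R` (division with remainder by `G`), which gives `U (G f) = F U(f)`. Multiplying the relation
by `F^n` and applying `U` yields the recurrence, all signs being irrelevant in characteristic 2.
-/

namespace Polynomial

variable {R : Type*} [CommRing R]

theorem Monic.mem_span_pow_mul_X_pow {g : R[X]} (hg : g.Monic) (hd : 0 < g.natDegree)
    (f : R[X]) :
    f ∈ Submodule.span R {p | ∃ k, ∃ i < g.natDegree, g ^ k * X ^ i = p} := by
  set S := Submodule.span R {p | ∃ k, ∃ i < g.natDegree, g ^ k * X ^ i = p}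
  have mul_mem : ∀ q ∈ S, g * q ∈ S := fun q hq ↦ by
    induction hq using Submodule.span_induction with
    | mem q hq =>
      obtain ⟨k, i, hi, rfl⟩ := hq
      exact Submodule.subset_span ⟨k + 1, i, hi, by ring⟩
    | zero => simp
    | add x y _ _ hx hy => simpa only [mul_add] using S.add_mem hx hy
    | smul c x _ hx => simpa only [mul_smul_comm] using S.smul_mem c hx
  have low_mem : ∀ p : R[X], p.natDegree < g.natDegree → p ∈ S := fun p hp ↦ by
    rw [p.as_sum_range_C_mul_X_pow' hp]
    refine S.sum_mem fun i hi ↦ ?_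
    rw [← smul_eq_C_mul]
    exact S.smul_mem _ (Submodule.subset_span ⟨0, i, Finset.mem_range.mp hi, by simp⟩)
  induction hdeg : f.natDegree using Nat.strong_induction_on generalizing f with
  | _ m ih =>
    by_cases hlt : m < g.natDegree
    · exact low_mem f (hdeg ▸ hlt)
    rw [← modByMonic_add_div f g]
    refine S.add_mem (low_mem _ (natDegree_modByMonic_lt f hg ?_)) (mul_mem _ (ih _ ?_ _ rfl))
    · rintro rfl
      simp at hd
    · rw [natDegree_divByMonic f hg]
      omega

theorem map_mul_eq_of_map_pow_mul_X_pow {A : Type*} [Ring A] [Algebra R A]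
    {g : R[X]} (hg : g.Monic) (hd : 0 < g.natDegree) {U : R[X] →ₗ[R] A} {a : A} {w : ℕ → A}
    (hU : ∀ k, ∀ i < g.natDegree, U (g ^ k * X ^ i) = a ^ k * w i) (f : R[X]) :
    U (g * f) = a * U f := by
  induction hg.mem_span_pow_mul_X_pow hd f using Submodule.span_induction with
  | mem x hx =>
    obtain ⟨k, i, hi, rfl⟩ := hx
    rw [← mul_assoc, ← pow_succ', hU _ i hi, hU k i hi, pow_succ', mul_assoc]
  | zero => simp
  | add x y _ _ hx hy => rw [mul_add, map_add, map_add, hx, hy, mul_add]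
  | smul c x _ hx => rw [mul_smul_comm, map_smul, map_smul, hx, mul_smul_comm]

end Polynomial

theorem CharTwo.add_pow_six {R : Type*} [CommRing R] [CharP R 2] (x y : R) :
    (x + y) ^ 6 = x ^ 6 + x ^ 4 * y ^ 2 + x ^ 2 * y ^ 4 + y ^ 6 := by
  linear_combination (3 * x ^ 5 * y + 7 * x ^ 4 * y ^ 2 + 10 * x ^ 3 * y ^ 3
    + 7 * x ^ 2 * y ^ 4 + 3 * x * y ^ 5) * CharTwo.two_eq_zero (R := R)

theorem Gp_monic : Gp.Monic := by
  simpa [Gp] using (monic_X_pow 5).mul (monic_X_add_C (1 : ZMod 2))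

theorem Gp_natDegree : Gp.natDegree = 6 := by
  rw [Gp]; compute_degree!

theorem Fp_add_Gp : Fp + Gp = X * (X + 1) := by
  have h : ((X : (ZMod 2)[X]) + 1) ^ 4 = X ^ 4 + 1 := by
    simpa using add_pow_char_pow (R := (ZMod 2)[X]) (p := 2) (n := 2) X 1
  rw [Fp, Gp]
  linear_combination X * (X + 1) * h
    + X * (X + 1) * X ^ 4 * CharTwo.two_eq_zero (R := (ZMod 2)[X])

theorem Fp_add_Gp_pow_six_add_mul_eq_zero : (Fp + Gp) ^ 6 + Fp * Gp = 0 := by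
  rw [Fp_add_Gp, show Fp * Gp = (X * (X + 1)) ^ 6 by rw [Fp, Gp]; ring]
  exact CharTwo.add_self_eq_zero _

theorem Fp_pow_six : Fp ^ 6 = Gp ^ 2 * Fp ^ 4 + Gp ^ 4 * Fp ^ 2 + Gp ^ 6 + Gp * Fp := by
  have h := Fp_add_Gp_pow_six_add_mul_eq_zero
  rw [CharTwo.add_pow_six] at h
  linear_combination h
    - (Gp ^ 2 * Fp ^ 4 + Gp ^ 4 * Fp ^ 2 + Gp ^ 6 + Gp * Fp)
      * CharTwo.two_eq_zero (R := (ZMod 2)[X])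

namespace IsU

variable {U : (ZMod 2)[X] →ₗ[ZMod 2] (ZMod 2)[X]}

theorem map_Gp_mul (hU : IsU U) (f : (ZMod 2)[X]) : U (Gp * f) = Fp * U f :=
  map_mul_eq_of_map_pow_mul_X_pow Gp_monic (by rw [Gp_natDegree]; norm_num)
    (fun k i hi ↦ hU k i (by rw [Gp_natDegree] at hi; omega)) f

theorem map_Gp_pow_mul (hU : IsU U) (k : ℕ) (f : (ZMod 2)[X]) :
    U (Gp ^ k * f) = Fp ^ k * U f := by
  induction k with
  | zero => simp
  | succ k ih => rw [pow_succ', mul_assoc, hU.map_Gp_mul, ih, pow_succ', mul_assoc]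

end IsU

theorem UF_recurrence (U : Polynomial (ZMod 2) →ₗ[ZMod 2] Polynomial (ZMod 2)) (hU : IsU U)
    (n : ℕ) :
    U (Fp ^ (n + 6)) + Fp ^ 2 * U (Fp ^ (n + 4)) + Fp ^ 4 * U (Fp ^ (n + 2))
      + Fp ^ 6 * U (Fp ^ n) + Fp * U (Fp ^ (n + 1)) = 0 := by
  set rest := Fp ^ 2 * U (Fp ^ (n + 4)) + Fp ^ 4 * U (Fp ^ (n + 2)) + Fp ^ 6 * U (Fp ^ n)
    + Fp * U (Fp ^ (n + 1))
  have hexpand : Fp ^ (n + 6) = Gp ^ 2 * Fp ^ (n + 4) + Gp ^ 4 * Fp ^ (n + 2)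
      + Gp ^ 6 * Fp ^ n + Gp * Fp ^ (n + 1) := by
    rw [pow_add, Fp_pow_six]; ring
  have hU_rec : U (Fp ^ (n + 6)) = rest := by
    simp only [hexpand, map_add, hU.map_Gp_pow_mul, hU.map_Gp_mul, rest]
  calc _ = rest + rest := by rw [hU_rec]; ring
    _ = 0 := CharTwo.add_self_eq_zero rest

end
end
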